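/- Let X be a locally compact, Hausdorff, connected space and let ρ be a quasi-linear functional on C₀(X) with ‖ρ‖ < ∞. Then ρ is monotone: for all f, g ∈ C₀(X), if f ≥ g then ρ(f) ≥ ρ(g). -/

import Mathlib

open Set Filter Topology MeasureTheory
open scoped ENNReal BoundedContinuousFunction

universe u

/-- A topological measure on `X`: a set function on subsets of `X` (only its values on open
and closed sets matter), not identically `∞` on open/closed sets, satisfying (TM1)–(TM3). -/
structure TopMeasure (X : Type u) [TopologicalSpace X] where
  toFun : Set X → ℝ≥0∞
  not_all_top : ∃ A : Set X, (IsOpen A ∨ IsClosed A) ∧ toFun A ≠ ∞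
  tm1 : ∀ A B : Set X, Disjoint A B → (IsOpen A ∨ IsCompact A) → (IsOpen B ∨ IsCompact B) →
      (IsOpen (A ∪ B) ∨ IsCompact (A ∪ B)) → toFun (A ∪ B) = toFun A + toFun B
  tm2 : ∀ U : Set X, IsOpen U → toFun U = ⨆ K ∈ {K : Set X | IsCompact K ∧ K ⊆ U}, toFun K
  tm3 : ∀ F : Set X, IsClosed F → toFun F = ⨅ U ∈ {U : Set X | IsOpen U ∧ F ⊆ U}, toFun U

/-- `μ` is compact-finite. -/
def TopMeasure.CompactFinite {X : Type u} [TopologicalSpace X] (μ : TopMeasure X) : Prop :=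
  ∀ K : Set X, IsCompact K → μ.toFun K ≠ ∞

/-- The set of compactly supported continuous functions, inside `C_b(X)`. -/
def CcS (X : Type u) [TopologicalSpace X] : Set (X →ᵇ ℝ) :=
  {f | HasCompactSupport (f : X → ℝ)}

/-- The set of continuous functions vanishing at infinity, inside `C_b(X)`. -/
def C0S (X : Type u) [TopologicalSpace X] : Set (X →ᵇ ℝ) :=
  {f | Tendsto (f : X → ℝ) (cocompact X) (nhds 0)}

/-- `𝔅` is a (non-unital) subalgebra of `C_b(X)`. -/
def IsSubalgS {X : Type u} [TopologicalSpace X] (𝔅 : Set (X →ᵇ ℝ)) : Prop :=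
  (∀ f g : X →ᵇ ℝ, f ∈ 𝔅 → g ∈ 𝔅 → f + g ∈ 𝔅) ∧
  (∀ f g : X →ᵇ ℝ, f ∈ 𝔅 → g ∈ 𝔅 → f * g ∈ 𝔅) ∧
  (∀ (c : ℝ) (f : X →ᵇ ℝ), f ∈ 𝔅 → c • f ∈ 𝔅)

/-- The singly generated subalgebra `B(h)`: the smallest closed (in `𝔅`) subalgebra of `𝔅`
containing `h`. -/
def sgen {X : Type u} [TopologicalSpace X] (𝔅 : Set (X →ᵇ ℝ)) (h : X →ᵇ ℝ) :
    Set (X →ᵇ ℝ) :=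
  ⋂₀ {S : Set (X →ᵇ ℝ) | S ⊆ 𝔅 ∧ h ∈ S ∧
      (∀ f g : X →ᵇ ℝ, f ∈ S → g ∈ S → f + g ∈ S) ∧
      (∀ f g : X →ᵇ ℝ, f ∈ S → g ∈ S → f * g ∈ S) ∧
      (∀ (c : ℝ) (f : X →ᵇ ℝ), f ∈ S → c • f ∈ S) ∧
      IsClosed {x : ↥𝔅 | (x : X →ᵇ ℝ) ∈ S}}

/-- A signed quasi-linear functional on `𝔅` (QI1), (QI2). -/
structure SignedQLF {X : Type u} [TopologicalSpace X] (𝔅 : Set (X →ᵇ ℝ)) where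
  toFun : (X →ᵇ ℝ) → ℝ
  smul_eq : ∀ (a : ℝ) (f : X →ᵇ ℝ), f ∈ 𝔅 → toFun (a • f) = a * toFun f
  add_eq : ∀ h ∈ 𝔅, ∀ f g : X →ᵇ ℝ, f ∈ sgen 𝔅 h → g ∈ sgen 𝔅 h →
      toFun (f + g) = toFun f + toFun g

/-- A (positive) quasi-linear functional on `𝔅` (QI1)–(QI3). -/
structure QLF {X : Type u} [TopologicalSpace X] (𝔅 : Set (X →ᵇ ℝ)) extends SignedQLF 𝔅 where
  pos : ∀ f : X →ᵇ ℝ, f ∈ 𝔅 → 0 ≤ f → 0 ≤ toFun f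

/-- `‖ρ‖ = sup {ρ(f) : f ∈ 𝔅, 0 ≤ f ≤ 1}`, as an extended real number. -/
noncomputable def qnorm {X : Type u} [TopologicalSpace X] {𝔅 : Set (X →ᵇ ℝ)} (ρ : QLF 𝔅) :
    ℝ≥0∞ :=
  ⨆ f ∈ {f : X →ᵇ ℝ | f ∈ 𝔅 ∧ 0 ≤ f ∧ f ≤ 1}, ENNReal.ofReal (ρ.toFun f)

/-- `m` is the measure `m_f` on `ℝ` associated with a finite topological measure `μ` and
`f ∈ C₀(X)` (case (A)): `m(W) = μ(f⁻¹(W))` for every open `W ⊆ ℝ`. -/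
def IsMfA {X : Type u} [TopologicalSpace X] (μ : TopMeasure X) (f : X →ᵇ ℝ)
    (m : Measure ℝ) : Prop :=
  ∀ W : Set ℝ, IsOpen W → m W = μ.toFun ((f : X → ℝ) ⁻¹' W)

/-- `m` is the measure `m_f` on `ℝ` associated with a compact-finite topological measure `μ`
and `f ∈ C_c(X)` (case (B)): `m(W) = μ(f⁻¹(W \ {0}))` for every open `W ⊆ ℝ`. -/
def IsMfB {X : Type u} [TopologicalSpace X] (μ : TopMeasure X) (f : X →ᵇ ℝ)
    (m : Measure ℝ) : Prop :=
  ∀ W : Set ℝ, IsOpen W → m W = μ.toFun ((f : X → ℝ) ⁻¹' (W \ {0}))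

/-- The support of a (Borel) measure on `ℝ`. -/
def msupp (m : Measure ℝ) : Set ℝ := {x : ℝ | ∀ U ∈ nhds x, 0 < m U}

/-- The set function `μ_ρ` on open sets:
`μ_ρ(U) = sup {ρ(f) : f ∈ C_c(X), 0 ≤ f ≤ 1, supp f ⊆ U}`. -/
noncomputable def muO {X : Type u} [TopologicalSpace X] {𝔅 : Set (X →ᵇ ℝ)} (ρ : QLF 𝔅)
    (U : Set X) : ℝ≥0∞ :=
  ⨆ f ∈ {f : X →ᵇ ℝ | f ∈ CcS X ∧ 0 ≤ f ∧ f ≤ 1 ∧ tsupport (f : X → ℝ) ⊆ U},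
    ENNReal.ofReal (ρ.toFun f)

/-- The set function `μ_ρ` on closed sets: `μ_ρ(F) = inf {μ_ρ(U) : U open, F ⊆ U}`. -/
noncomputable def muC {X : Type u} [TopologicalSpace X] {𝔅 : Set (X →ᵇ ℝ)} (ρ : QLF 𝔅)
    (F : Set X) : ℝ≥0∞ :=
  ⨅ U ∈ {U : Set X | IsOpen U ∧ F ⊆ U}, muO ρ U

open Classical in
/-- The set function `μ_ρ`. -/
noncomputable def muR {X : Type u} [TopologicalSpace X] {𝔅 : Set (X →ᵇ ℝ)} (ρ : QLF 𝔅) :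
    Set X → ℝ≥0∞ :=
  fun A => if IsOpen A then muO ρ A else muC ρ A

/-- `ρ = ρ_μ` on `C₀(X)` (case (A)): for every `f ∈ C₀(X)` and every measure `m_f`
associated with `μ` and `f`, `ρ(f) = ∫_ℝ id dm_f`. -/
def ReprA {X : Type u} [TopologicalSpace X] {𝔅 : Set (X →ᵇ ℝ)} (μ : TopMeasure X)
    (ρ : QLF 𝔅) : Prop :=
  ∀ f ∈ C0S X, ∀ m : Measure ℝ, IsMfA μ f m → ρ.toFun f = ∫ t, t ∂m

/-- `ρ = ρ_μ` on `C_c(X)` (case (B)). -/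
def ReprB {X : Type u} [TopologicalSpace X] {𝔅 : Set (X →ᵇ ℝ)} (μ : TopMeasure X)
    (ρ : QLF 𝔅) : Prop :=
  ∀ f ∈ CcS X, ∀ m : Measure ℝ, IsMfB μ f m → ρ.toFun f = ∫ t, t ∂m

/-!
For `0 ≤ g ≤ f`, cut the range at the levels `i ε`: `f = ∑ᵢ fᵢ` and `g = ∑ᵢ gᵢ` with
`fᵢ = min (max (f - i ε) 0) ε`. By Weierstrass, the singly generated subalgebra `B(h)` contains
`φ ∘ h` for every continuous `φ` with `φ 0 = 0`; hence all `fᵢ` lie in `B(f)`, all `gᵢ` in `B(g)`,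
and `ρ f = ∑ ρ fᵢ`, `ρ g = ∑ ρ gᵢ`. Where `gᵢ₊₁ > 0` we have `fᵢ = ε`, so `gᵢ₊₁` and `fᵢ` are
both functions of `fᵢ + gᵢ₊₁`, and on that singly generated subalgebra `ρ` is linear and
positive, so `ρ gᵢ₊₁ ≤ ρ fᵢ`. Summing, `ρ g ≤ ρ f + ρ g₀ ≤ ρ f + ε ‖ρ‖`; let `ε → 0`.
A general `f` reduces to this through `ρ f = ρ f⁺ - ρ f⁻`, as `f⁺ = f + f⁻` with `f⁻ ∈ B(f)`.
-/

theorem exists_polynomial_coeff_zero_near {φ : ℝ → ℝ} {M ε : ℝ}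
    (hφ : ContinuousOn φ (Icc (-M) M)) (hφ0 : φ 0 = 0) (hM : 0 ≤ M) (hε : 0 < ε) :
    ∃ p : Polynomial ℝ, p.coeff 0 = 0 ∧ ∀ t ∈ Icc (-M) M, |p.eval t - φ t| < ε := by
  obtain ⟨p, hp⟩ := exists_polynomial_near_of_continuousOn (-M) M φ hφ (ε / 2) (half_pos hε)
  refine ⟨p - Polynomial.C (p.eval 0), by simp [Polynomial.coeff_zero_eq_eval_zero], ?_⟩
  intro t ht
  have hp0 : |p.eval 0| < ε / 2 := by
    simpa [hφ0] using hp 0 ⟨by linarith, hM⟩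
  calc |(p - Polynomial.C (p.eval 0)).eval t - φ t|
      = |(p.eval t - φ t) - p.eval 0| := by simp [sub_right_comm]
    _ ≤ |p.eval t - φ t| + |p.eval 0| := abs_sub _ _
    _ < ε / 2 + ε / 2 := add_lt_add (hp t ht) hp0
    _ = ε := add_halves ε

theorem BoundedContinuousFunction.aeval_apply {X : Type u} [TopologicalSpace X] (h : X →ᵇ ℝ)
    (p : Polynomial ℝ) (x : X) : Polynomial.aeval h p x = p.eval (h x) := by
  simp [Polynomial.aeval_eq_sum_range, Polynomial.eval_eq_sum_range]

section SinglyGenerated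

variable {X : Type u} [TopologicalSpace X] {𝔅 : Set (X →ᵇ ℝ)} {h : X →ᵇ ℝ}

theorem mem_sgen_self : h ∈ sgen 𝔅 h := fun _ hS => hS.2.1

theorem add_mem_sgen {f g : X →ᵇ ℝ} (hf : f ∈ sgen 𝔅 h) (hg : g ∈ sgen 𝔅 h) :
    f + g ∈ sgen 𝔅 h :=
  fun S hS => hS.2.2.1 f g (hf S hS) (hg S hS)

theorem mul_mem_sgen {f g : X →ᵇ ℝ} (hf : f ∈ sgen 𝔅 h) (hg : g ∈ sgen 𝔅 h) :
    f * g ∈ sgen 𝔅 h :=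
  fun S hS => hS.2.2.2.1 f g (hf S hS) (hg S hS)

theorem smul_mem_sgen (c : ℝ) {f : X →ᵇ ℝ} (hf : f ∈ sgen 𝔅 h) : c • f ∈ sgen 𝔅 h :=
  fun S hS => hS.2.2.2.2.1 c f (hf S hS)

theorem zero_mem_sgen : (0 : X →ᵇ ℝ) ∈ sgen 𝔅 h := by
  simpa using smul_mem_sgen 0 (mem_sgen_self (𝔅 := 𝔅) (h := h))

theorem sub_mem_sgen {f g : X →ᵇ ℝ} (hf : f ∈ sgen 𝔅 h) (hg : g ∈ sgen 𝔅 h) :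
    f - g ∈ sgen 𝔅 h := by
  rw [sub_eq_add_neg, ← neg_one_smul ℝ g]
  exact add_mem_sgen hf (smul_mem_sgen (-1) hg)

theorem sum_mem_sgen {ι : Type*} (s : Finset ι) {u : ι → X →ᵇ ℝ}
    (hu : ∀ i ∈ s, u i ∈ sgen 𝔅 h) : ∑ i ∈ s, u i ∈ sgen 𝔅 h :=
  Finset.sum_induction u (· ∈ sgen 𝔅 h) (fun _ _ => add_mem_sgen) zero_mem_sgen hu

theorem pow_succ_mem_sgen (n : ℕ) : h ^ (n + 1) ∈ sgen 𝔅 h := by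
  induction n with
  | zero => simpa using mem_sgen_self
  | succ n ih => simpa [pow_succ] using mul_mem_sgen ih mem_sgen_self

theorem aeval_mem_sgen {p : Polynomial ℝ} (hp : p.coeff 0 = 0) :
    Polynomial.aeval h p ∈ sgen 𝔅 h := by
  rw [Polynomial.aeval_eq_sum_range]
  refine sum_mem_sgen _ fun k _ => ?_
  rcases k with _ | k
  · simpa [hp] using zero_mem_sgen
  · exact smul_mem_sgen _ (pow_succ_mem_sgen k)

theorem mem_sgen_of_forall_dist_lt {F : X →ᵇ ℝ} (hF : F ∈ 𝔅)
    (happrox : ∀ ε > 0, ∃ G ∈ sgen 𝔅 h, dist G F < ε) : F ∈ sgen 𝔅 h := by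
  intro S hS
  have hclosure : (⟨F, hF⟩ : 𝔅) ∈ closure {x : 𝔅 | (x : X →ᵇ ℝ) ∈ S} := by
    refine Metric.mem_closure_iff.mpr fun ε hε => ?_
    obtain ⟨G, hG, hGF⟩ := happrox ε hε
    exact ⟨⟨G, hS.1 (hG S hS)⟩, hG S hS, by rwa [dist_comm, Subtype.dist_eq]⟩
  rw [hS.2.2.2.2.2.closure_eq] at hclosure
  exact hclosure

theorem mem_sgen_of_eq_comp {φ : ℝ → ℝ} (hφ : Continuous φ) (hφ0 : φ 0 = 0) {F : X →ᵇ ℝ}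
    (hF : F ∈ 𝔅) (hFh : ∀ x, F x = φ (h x)) : F ∈ sgen 𝔅 h := by
  refine mem_sgen_of_forall_dist_lt hF fun ε hε => ?_
  obtain ⟨p, hp0, hp⟩ :=
    exists_polynomial_coeff_zero_near hφ.continuousOn hφ0 (norm_nonneg h) (half_pos hε)
  refine ⟨Polynomial.aeval h p, aeval_mem_sgen hp0, ?_⟩
  refine lt_of_le_of_lt ((BoundedContinuousFunction.dist_le (half_pos hε).le).mpr fun x => ?_)
    (half_lt_self hε)
  rw [Real.dist_eq, h.aeval_apply, hFh]
  exact (hp (h x) (abs_le.mp (h.norm_coe_le_norm x))).le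

theorem sgen_subset (h𝔅 : IsSubalgS 𝔅) (hh : h ∈ 𝔅) : sgen 𝔅 h ⊆ 𝔅 := by
  refine fun f hf => hf 𝔅 ⟨subset_rfl, hh, h𝔅.1, h𝔅.2.1, h𝔅.2.2, ?_⟩
  simp [isClosed_univ]

end SinglyGenerated

section VanishingAtInfinity

variable {X : Type u} [TopologicalSpace X] {f : X →ᵇ ℝ}

theorem isSubalgS_C0S : IsSubalgS (C0S X) :=
  ⟨fun _ _ hf hg => by simpa [C0S, Pi.add_def] using hf.add hg,
    fun _ _ hf hg => by simpa [C0S, Pi.mul_def] using hf.mul hg,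
    fun c _ hf => by simpa [C0S] using hf.const_mul c⟩

theorem mem_C0S_of_eq_comp {φ : ℝ → ℝ} (hφ : Continuous φ) (hφ0 : φ 0 = 0) {F : X →ᵇ ℝ}
    (hf : f ∈ C0S X) (hFf : ∀ x, F x = φ (f x)) : F ∈ C0S X := by
  have hFf : (F : X → ℝ) = φ ∘ f := funext hFf
  simpa [C0S, hFf, hφ0] using (hφ.tendsto 0).comp hf

theorem mem_sgen_C0S_of_eq_comp {φ : ℝ → ℝ} (hφ : Continuous φ) (hφ0 : φ 0 = 0) {F : X →ᵇ ℝ}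
    (hf : f ∈ C0S X) (hFf : ∀ x, F x = φ (f x)) : F ∈ sgen (C0S X) f :=
  mem_sgen_of_eq_comp hφ hφ0 (mem_C0S_of_eq_comp hφ hφ0 hf hFf) hFf

theorem posPart_mem_C0S (hf : f ∈ C0S X) : f⁺ ∈ C0S X :=
  mem_C0S_of_eq_comp continuous_posPart (by simp) hf fun _ => rfl

theorem negPart_mem_C0S (hf : f ∈ C0S X) : f⁻ ∈ C0S X :=
  mem_C0S_of_eq_comp continuous_negPart (by simp) hf fun _ => rfl

end VanishingAtInfinity

section Layers

def layer (a ε t : ℝ) : ℝ := min (max (t - a) 0) ε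

theorem lipschitzWith_layer (a ε : ℝ) : LipschitzWith 1 (layer a ε) :=
  (((IsometryEquiv.subRight a).isometry.lipschitz).max_const 0).min_const ε

variable {a ε t : ℝ}

theorem layer_nonneg (hε : 0 ≤ ε) : 0 ≤ layer a ε t := le_min (le_max_right _ _) hε

theorem layer_le : layer a ε t ≤ ε := min_le_right _ _

theorem layer_of_le (hε : 0 ≤ ε) (ht : t ≤ a) : layer a ε t = 0 := by
  simp only [layer, min_def, max_def]; split_ifs <;> linarith

theorem layer_of_add_le (ht : a + ε ≤ t) : layer a ε t = ε := by
  simp only [layer, min_def, max_def]; split_ifs <;> linarith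

theorem layer_of_mem_Icc (h₁ : a ≤ t) (h₂ : t ≤ a + ε) : layer a ε t = t - a := by
  simp only [layer, min_def, max_def]; split_ifs <;> linarith

theorem lt_of_layer_pos (h : 0 < layer a ε t) : a < t := by
  contrapose! h
  exact min_le_of_left_le (max_le (by linarith) le_rfl)

theorem layer_zero (ha : 0 ≤ a) (hε : 0 ≤ ε) : layer a ε 0 = 0 := layer_of_le hε ha

theorem sum_range_layer (hε : 0 ≤ ε) (N : ℕ) (t : ℝ) :
    ∑ i ∈ Finset.range N, layer (i * ε) ε t = min (max t 0) (N * ε) := by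
  induction N with
  | zero => simp
  | succ N ih =>
    have hN : 0 ≤ (N : ℝ) * ε := by positivity
    rw [Finset.sum_range_succ, ih, Nat.cast_succ, add_one_mul]
    simp only [layer, min_def, max_def]
    split_ifs <;> linarith

end Layers

noncomputable def BoundedContinuousFunction.layer {X : Type u} [TopologicalSpace X]
    (f : X →ᵇ ℝ) (a ε : ℝ) : X →ᵇ ℝ :=
  BoundedContinuousFunction.comp (_root_.layer a ε) (lipschitzWith_layer a ε) f

section LayersOfFunctions

variable {X : Type u} [TopologicalSpace X] {f : X →ᵇ ℝ} {a ε : ℝ}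

@[simp]
theorem BoundedContinuousFunction.layer_apply (x : X) : f.layer a ε x = _root_.layer a ε (f x) :=
  rfl

theorem norm_layer_le (hε : 0 ≤ ε) : ‖f.layer a ε‖ ≤ ε :=
  (BoundedContinuousFunction.norm_le hε).mpr fun _ => by
    rw [BoundedContinuousFunction.layer_apply, Real.norm_of_nonneg (layer_nonneg hε)]
    exact layer_le

theorem layer_mem_C0S (ha : 0 ≤ a) (hε : 0 ≤ ε) (hf : f ∈ C0S X) : f.layer a ε ∈ C0S X :=
  mem_C0S_of_eq_comp (lipschitzWith_layer a ε).continuous (layer_zero ha hε) hf fun _ => rfl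

theorem layer_mem_sgen (ha : 0 ≤ a) (hε : 0 ≤ ε) (hf : f ∈ C0S X) :
    f.layer a ε ∈ sgen (C0S X) f :=
  mem_sgen_C0S_of_eq_comp (lipschitzWith_layer a ε).continuous (layer_zero ha hε) hf fun _ => rfl

theorem sum_range_layer_eq_self (hε : 0 ≤ ε) {N : ℕ} (hf0 : 0 ≤ f) (hfN : ∀ x, f x ≤ N * ε) :
    ∑ i ∈ Finset.range N, f.layer (i * ε) ε = f := by
  ext x
  have hfx : 0 ≤ f x := hf0 x
  simp [sum_range_layer hε, max_eq_left hfx, min_eq_left (hfN x)]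

end LayersOfFunctions

namespace QLF

section SinglyGenerated

variable {X : Type u} [TopologicalSpace X] {𝔅 : Set (X →ᵇ ℝ)} (ρ : QLF 𝔅) {h : X →ᵇ ℝ}

theorem map_sum_of_mem_sgen (hh : h ∈ 𝔅) {ι : Type*} (s : Finset ι) {u : ι → X →ᵇ ℝ}
    (hu : ∀ i ∈ s, u i ∈ sgen 𝔅 h) : ρ.toFun (∑ i ∈ s, u i) = ∑ i ∈ s, ρ.toFun (u i) := by
  classical
  induction s using Finset.induction_on with
  | empty => simpa using ρ.smul_eq 0 h hh
  | insert i s hi ih =>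
    rw [Finset.forall_mem_insert] at hu
    rw [Finset.sum_insert hi, Finset.sum_insert hi,
      ρ.add_eq h hh _ _ hu.1 (sum_mem_sgen s hu.2), ih hu.2]

theorem mono_of_mem_sgen (h𝔅 : IsSubalgS 𝔅) (hh : h ∈ 𝔅) {u v : X →ᵇ ℝ}
    (hu : u ∈ sgen 𝔅 h) (hv : v ∈ sgen 𝔅 h) (huv : u ≤ v) : ρ.toFun u ≤ ρ.toFun v := by
  have hvu := sub_mem_sgen hv hu
  have hadd : ρ.toFun v = ρ.toFun u + ρ.toFun (v - u) := by
    simpa using ρ.add_eq h hh u (v - u) hu hvu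
  linarith [ρ.pos _ (sgen_subset h𝔅 hh hvu) (sub_nonneg.mpr huv)]

theorem apply_le_norm_mul_qnorm (h𝔅 : IsSubalgS 𝔅) (hρ : qnorm ρ ≠ ∞) {f : X →ᵇ ℝ}
    (hf : f ∈ 𝔅) (hf0 : 0 ≤ f) : ρ.toFun f ≤ ‖f‖ * (qnorm ρ).toReal := by
  rcases (norm_nonneg f).eq_or_lt with hnorm | hnorm
  · have hf : f = 0 := norm_eq_zero.mp hnorm.symm
    simpa [hf] using (ρ.smul_eq 0 f ‹_›).le
  set f₁ := ‖f‖⁻¹ • f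
  have hf₁ : f₁ ∈ 𝔅 := h𝔅.2.2 _ f hf
  have hf₁0 : 0 ≤ f₁ := fun x => mul_nonneg (inv_nonneg.mpr hnorm.le) (hf0 x)
  have hf₁1 : f₁ ≤ 1 := fun x => by
    simpa [f₁, inv_mul_le_iff₀ hnorm] using (abs_le.mp (f.norm_coe_le_norm x)).2
  have hρf₁ : ρ.toFun f₁ ≤ (qnorm ρ).toReal :=
    (ENNReal.ofReal_le_iff_le_toReal hρ).mp (le_iSup₂_of_le f₁ ⟨hf₁, hf₁0, hf₁1⟩ le_rfl)
  have hρf : ρ.toFun f = ‖f‖ * ρ.toFun f₁ := by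
    rw [ρ.smul_eq _ f hf, mul_inv_cancel_left₀ hnorm.ne']
  rw [hρf]
  exact mul_le_mul_of_nonneg_left hρf₁ hnorm.le

end SinglyGenerated

variable {X : Type u} [TopologicalSpace X] (ρ : QLF (C0S X)) {f g : X →ᵇ ℝ} {ε : ℝ}

theorem apply_le_of_eq_on_pos (hε : 0 ≤ ε) {k u : X →ᵇ ℝ} (hk : k ∈ C0S X)
    (hu : u ∈ C0S X) (hk0 : ∀ x, 0 ≤ k x) (hkε : ∀ x, k x ≤ ε) (hu0 : ∀ x, 0 ≤ u x)
    (huε : ∀ x, u x ≤ ε) (hku : ∀ x, 0 < k x → u x = ε) : ρ.toFun k ≤ ρ.toFun u := by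
  have hs : u + k ∈ C0S X := isSubalgS_C0S.1 _ _ hu hk
  have hk_eq : ∀ x, k x = layer ε ε ((u + k) x) := fun x => by
    rcases (hk0 x).lt_or_eq with hpos | hzero
    · rw [BoundedContinuousFunction.add_apply, hku x hpos,
        layer_of_mem_Icc (by linarith) (by linarith [hkε x])]
      ring
    · rw [BoundedContinuousFunction.add_apply, ← hzero, add_zero, layer_of_le hε (huε x)]
  have hu_eq : ∀ x, u x = layer 0 ε ((u + k) x) := fun x => by
    rcases (hk0 x).lt_or_eq with hpos | hzero
    · rw [BoundedContinuousFunction.add_apply, hku x hpos, layer_of_add_le (by linarith)]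
    · rw [BoundedContinuousFunction.add_apply, ← hzero, add_zero,
        layer_of_mem_Icc (hu0 x) (by linarith [huε x]), sub_zero]
  have hcont (a : ℝ) := (lipschitzWith_layer a ε).continuous
  refine ρ.mono_of_mem_sgen isSubalgS_C0S hs
    (mem_sgen_C0S_of_eq_comp (hcont ε) (layer_zero hε hε) hs hk_eq)
    (mem_sgen_C0S_of_eq_comp (hcont 0) (layer_zero le_rfl hε) hs hu_eq) fun x => ?_
  show k x ≤ u x
  rcases (hk0 x).lt_or_eq with hpos | hzero
  · exact (hku x hpos).symm ▸ hkε x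
  · exact hzero ▸ hu0 x

theorem apply_eq_sum_layer (hε : 0 ≤ ε) {N : ℕ} (hf : f ∈ C0S X) (hf0 : 0 ≤ f)
    (hfN : ∀ x, f x ≤ N * ε) :
    ρ.toFun f = ∑ i ∈ Finset.range N, ρ.toFun (f.layer (i * ε) ε) := by
  conv_lhs => rw [← sum_range_layer_eq_self hε hf0 hfN]
  exact ρ.map_sum_of_mem_sgen hf _ fun i _ => layer_mem_sgen (by positivity) hε hf

theorem apply_layer_succ_le (hε : 0 ≤ ε) (hf : f ∈ C0S X) (hg : g ∈ C0S X) (hgf : g ≤ f)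
    (i : ℕ) : ρ.toFun (g.layer ((i + 1 : ℕ) * ε) ε) ≤ ρ.toFun (f.layer (i * ε) ε) := by
  refine ρ.apply_le_of_eq_on_pos hε (layer_mem_C0S (by positivity) hε hg)
    (layer_mem_C0S (by positivity) hε hf) (fun _ => layer_nonneg hε) (fun _ => layer_le)
    (fun _ => layer_nonneg hε) (fun _ => layer_le) fun x hpos => ?_
  have hgx := lt_of_layer_pos hpos
  rw [Nat.cast_succ, add_one_mul] at hgx
  have hgfx : g x ≤ f x := hgf x
  exact layer_of_add_le (by linarith)

theorem apply_le_add_mul_qnorm (hρ : qnorm ρ ≠ ∞) (hf : f ∈ C0S X) (hg : g ∈ C0S X)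
    (hg0 : 0 ≤ g) (hgf : g ≤ f) (hε : 0 < ε) :
    ρ.toFun g ≤ ρ.toFun f + ε * (qnorm ρ).toReal := by
  obtain ⟨N, hN⟩ := exists_nat_ge (‖f‖ / ε)
  have hfN : ∀ x, f x ≤ (N + 1 : ℕ) * ε := fun x => by
    have := (div_le_iff₀ hε).mp hN
    push_cast
    nlinarith [(abs_le.mp (f.norm_coe_le_norm x)).2]
  have hsteps := Finset.sum_le_sum fun i (_ : i ∈ Finset.range N) =>
    ρ.apply_layer_succ_le hε.le hf hg hgf i
  have hbottom : ρ.toFun (g.layer ((0 : ℕ) * ε) ε) ≤ ε * (qnorm ρ).toReal :=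
    (ρ.apply_le_norm_mul_qnorm isSubalgS_C0S hρ (layer_mem_C0S (by simp) hε.le hg)
      fun _ => layer_nonneg hε.le).trans
      (mul_le_mul_of_nonneg_right (norm_layer_le hε.le) ENNReal.toReal_nonneg)
  have htop : 0 ≤ ρ.toFun (f.layer (N * ε) ε) :=
    ρ.pos _ (layer_mem_C0S (by positivity) hε.le hf) fun _ => layer_nonneg hε.le
  rw [ρ.apply_eq_sum_layer hε.le hg hg0 fun x => (hgf x).trans (hfN x),
    ρ.apply_eq_sum_layer hε.le hf (hg0.trans hgf) hfN, Finset.sum_range_succ',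
    Finset.sum_range_succ]
  linarith

theorem mono_of_nonneg (hρ : qnorm ρ ≠ ∞) (hf : f ∈ C0S X) (hg : g ∈ C0S X) (hg0 : 0 ≤ g)
    (hgf : g ≤ f) : ρ.toFun g ≤ ρ.toFun f := by
  set C := (qnorm ρ).toReal
  have hC : 0 ≤ C := ENNReal.toReal_nonneg
  refine le_of_forall_pos_le_add fun δ hδ => ?_
  calc ρ.toFun g ≤ ρ.toFun f + δ / (C + 1) * C :=
        ρ.apply_le_add_mul_qnorm hρ hf hg hg0 hgf (by positivity)
    _ ≤ ρ.toFun f + δ := by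
        gcongr
        rw [div_mul_eq_mul_div, div_le_iff₀ (by positivity)]
        nlinarith

theorem apply_eq_posPart_sub_negPart (hf : f ∈ C0S X) :
    ρ.toFun f = ρ.toFun f⁺ - ρ.toFun f⁻ := by
  have hneg : f⁻ ∈ sgen (C0S X) f :=
    mem_sgen_C0S_of_eq_comp continuous_negPart (by simp) hf fun _ => rfl
  rw [sub_eq_iff_eq_add.mp (posPart_sub_negPart f), ρ.add_eq f hf f f⁻ mem_sgen_self hneg]
  ring

end QLF

theorem qlf_monotone_of_bounded_general {X : Type u} [TopologicalSpace X]
    (ρ : QLF (C0S X)) (hρ : qnorm ρ ≠ ∞)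
    (f g : X →ᵇ ℝ) (hf : f ∈ C0S X) (hg : g ∈ C0S X) (hle : g ≤ f) :
    ρ.toFun g ≤ ρ.toFun f := by
  have hpos : ρ.toFun g⁺ ≤ ρ.toFun f⁺ := ρ.mono_of_nonneg hρ (posPart_mem_C0S hf)
    (posPart_mem_C0S hg) (posPart_nonneg g) (posPart_mono hle)
  have hneg : ρ.toFun f⁻ ≤ ρ.toFun g⁻ := ρ.mono_of_nonneg hρ (negPart_mem_C0S hg)
    (negPart_mem_C0S hf) (negPart_nonneg f) (negPart_anti hle)
  rw [ρ.apply_eq_posPart_sub_negPart hf, ρ.apply_eq_posPart_sub_negPart hg]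
  linarith

/-- a quasi-linear functional on `C₀(X)` with `‖ρ‖ < ∞` is monotone. -/
theorem qlf_monotone_of_bounded {X : Type u} [TopologicalSpace X]
    [LocallyCompactSpace X] [T2Space X] [ConnectedSpace X]
    (ρ : QLF (C0S X)) (hρ : qnorm ρ ≠ ∞)
    (f g : X →ᵇ ℝ) (hf : f ∈ C0S X) (hg : g ∈ C0S X) (hle : g ≤ f) :
    ρ.toFun g ≤ ρ.toFun f :=
  qlf_monotone_of_bounded_general ρ hρ f g hf hg hle
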